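/- arXiv:2510.26762 — 6 statements merged into one kernel-verified Lean document; each statement's English description precedes it below -/
import Mathlib

section
/- Let N be a positive integer, (X, μ) a measure space, g : X → ℝ an integrable function, and u : X → ℂ^N a measurable function with ‖u(x)‖ = 1 for μ-almost every x, such that the matrix-valued map x ↦ g(x)·(u(x) u(x)†) is Bochner integrable. Define the N×N complex matrix C := ∫ g(x) (u(x) u(x)†) dμ(x), where u(x) u(x)† denotes the rank-one matrix with entries u(x)_n · conj(u(x)_{n'}). Then C is Hermitian, and the sum of the absolute values of the eigenvalues of C is at most ∫ |g(x)| dμ(x). -/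
/-!
For every vector `v` the quadratic form `v† C v` is `∫ g |⟨v, u⟩|² dμ`, so the eigenvalue of `C`
along an orthonormal eigenvector `bᵢ` is bounded in modulus by `∫ |g| |⟨bᵢ, u⟩|² dμ`. Summing over the eigenbasis and using Parseval,
`∑ᵢ |⟨bᵢ, u⟩|² = ‖u‖² = 1`, gives the bound `∫ |g| dμ`.
-/

open MeasureTheory Matrix
open scoped InnerProductSpace ComplexConjugate

section
variable {𝕜 ι X : Type*} [RCLike 𝕜] [MeasurableSpace X] {μ : Measure X}
  {g : X → ℝ} {u : X → EuclideanSpace 𝕜 ι} {C : Matrix ι ι 𝕜}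

lemma isHermitian_of_apply_eq_integral
    (hC : ∀ n n', C n n' = ∫ x, (g x : 𝕜) * (u x n * conj (u x n')) ∂μ) : C.IsHermitian := by
  refine IsHermitian.ext fun n n' => ?_
  rw [hC, hC, RCLike.star_def, ← integral_conj]
  congr 1 with x
  simp only [map_mul, RCLike.conj_conj, RCLike.conj_ofReal]
  ring

variable [Fintype ι]

lemma mul_norm_inner_sq_eq_sum (c : 𝕜) (v w : EuclideanSpace 𝕜 ι) :
    c * (‖⟪v, w⟫_𝕜‖ : 𝕜) ^ 2 = ∑ n, ∑ m, conj (v n) * v m * (c * (w n * conj (w m))) := by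
  rw [← RCLike.mul_conj, PiLp.inner_apply, map_sum, Finset.sum_mul_sum, Finset.mul_sum]
  simp only [RCLike.inner_apply, map_mul, RCLike.conj_conj, Finset.mul_sum]
  exact Finset.sum_congr rfl fun n _ => Finset.sum_congr rfl fun m _ => by ring

lemma star_dotProduct_mulVec_eq_sum (v : ι → 𝕜) :
    star v ⬝ᵥ (C *ᵥ v) = ∑ n, ∑ m, conj (v n) * v m * C n m := by
  simp only [dotProduct, mulVec, Pi.star_apply, RCLike.star_def, Finset.mul_sum]
  exact Finset.sum_congr rfl fun n _ => Finset.sum_congr rfl fun m _ => by ring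

lemma integrable_mul_norm_inner_sq
    (hint : ∀ n n', Integrable (fun x => (g x : 𝕜) * (u x n * conj (u x n'))) μ)
    (v : EuclideanSpace 𝕜 ι) :
    Integrable (fun x => (g x : 𝕜) * (‖⟪v, u x⟫_𝕜‖ : 𝕜) ^ 2) μ := by
  simp_rw [mul_norm_inner_sq_eq_sum]
  exact integrable_finsetSum _ fun n _ => integrable_finsetSum _ fun m _ =>
    (hint n m).const_mul _

lemma star_dotProduct_mulVec_eq_integral
    (hint : ∀ n n', Integrable (fun x => (g x : 𝕜) * (u x n * conj (u x n'))) μ)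
    (hC : ∀ n n', C n n' = ∫ x, (g x : 𝕜) * (u x n * conj (u x n')) ∂μ)
    (v : EuclideanSpace 𝕜 ι) :
    star ⇑v ⬝ᵥ (C *ᵥ ⇑v) = ∫ x, (g x : 𝕜) * (‖⟪v, u x⟫_𝕜‖ : 𝕜) ^ 2 ∂μ := by
  simp_rw [star_dotProduct_mulVec_eq_sum, hC, ← integral_const_mul, mul_norm_inner_sq_eq_sum]
  rw [integral_finsetSum _ fun n _ => integrable_finsetSum _ fun m _ =>
    (hint n m).const_mul _]
  exact Finset.sum_congr rfl fun n _ =>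
    (integral_finsetSum _ fun m _ => (hint n m).const_mul _).symm

lemma sum_abs_eigenvalues_le_integral [DecidableEq ι]
    (hint : ∀ n n', Integrable (fun x => (g x : 𝕜) * (u x n * conj (u x n'))) μ)
    (hC : ∀ n n', C n n' = ∫ x, (g x : 𝕜) * (u x n * conj (u x n')) ∂μ)
    (hH : C.IsHermitian) :
    ∑ i, |hH.eigenvalues i| ≤ ∫ x, |g x| * ‖u x‖ ^ 2 ∂μ := by
  set b := hH.eigenvectorBasis
  have hle (i : ι) :
      |hH.eigenvalues i| ≤ ∫ x, ‖(g x : 𝕜) * (‖⟪b i, u x⟫_𝕜‖ : 𝕜) ^ 2‖ ∂μ := by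
    rw [hH.eigenvalues_eq, star_dotProduct_mulVec_eq_integral hint hC]
    exact (RCLike.abs_re_le_norm _).trans (norm_integral_le_integral_norm _)
  calc ∑ i, |hH.eigenvalues i|
      ≤ ∑ i, ∫ x, ‖(g x : 𝕜) * (‖⟪b i, u x⟫_𝕜‖ : 𝕜) ^ 2‖ ∂μ := Finset.sum_le_sum fun i _ => hle i
    _ = ∫ x, ∑ i, ‖(g x : 𝕜) * (‖⟪b i, u x⟫_𝕜‖ : 𝕜) ^ 2‖ ∂μ :=
      (integral_finsetSum _ fun i _ => (integrable_mul_norm_inner_sq hint (b i)).norm).symm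
    _ = ∫ x, |g x| * ‖u x‖ ^ 2 ∂μ := by
      congr 1 with x
      simp only [norm_mul, norm_pow, RCLike.norm_ofReal, abs_norm, ← Finset.mul_sum,
        b.sum_sq_norm_inner_right]

end

theorem stmt0_general {N : ℕ} {X : Type*} [MeasurableSpace X] (μ : Measure X)
    (g : X → ℝ)
    (u : X → EuclideanSpace ℂ (Fin N))
    (hnorm : ∀ᵐ x ∂μ, ‖u x‖ = 1)
    (hint : ∀ n n' : Fin N,
      Integrable (fun x => (g x : ℂ) * (u x n * (starRingEnd ℂ) (u x n'))) μ)
    (C : Matrix (Fin N) (Fin N) ℂ)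
    (hCdef : ∀ n n', C n n' = ∫ x, (g x : ℂ) * (u x n * (starRingEnd ℂ) (u x n')) ∂μ) :
    C.IsHermitian ∧
      ∀ hC : C.IsHermitian, ∑ i, |hC.eigenvalues i| ≤ ∫ x, |g x| ∂μ := by
  refine ⟨isHermitian_of_apply_eq_integral hCdef, fun hC => ?_⟩
  refine (sum_abs_eigenvalues_le_integral hint hCdef hC).trans_eq (integral_congr_ae ?_)
  filter_upwards [hnorm] with x hx
  rw [hx, one_pow, mul_one]

/-- **Extended Bochner bound, abstract form.**
For an integrable `g : X → ℝ` and a measurable `u : X → ℂ^N` with `‖u x‖ = 1` a.e.,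
the matrix `C := ∫ g x • (u x)(u x)† dμ` is Hermitian and the sum of the absolute
values of its eigenvalues is at most `∫ |g| dμ`. -/
theorem stmt0 {N : ℕ} (hN : 0 < N) {X : Type*} [MeasurableSpace X] (μ : Measure X)
    [MeasurableSpace (EuclideanSpace ℂ (Fin N))]
    [BorelSpace (EuclideanSpace ℂ (Fin N))]
    (g : X → ℝ) (hg : Integrable g μ)
    (u : X → EuclideanSpace ℂ (Fin N)) (hu : Measurable u)
    (hnorm : ∀ᵐ x ∂μ, ‖u x‖ = 1)
    (hint : ∀ n n' : Fin N,
      Integrable (fun x => (g x : ℂ) * (u x n * (starRingEnd ℂ) (u x n'))) μ)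
    (C : Matrix (Fin N) (Fin N) ℂ)
    (hCdef : ∀ n n', C n n' = ∫ x, (g x : ℂ) * (u x n * (starRingEnd ℂ) (u x n')) ∂μ) :
    C.IsHermitian ∧
      ∀ hC : C.IsHermitian, ∑ i, |hC.eigenvalues i| ≤ ∫ x, |g x| ∂μ :=
  stmt0_general μ g u hnorm hint C hCdef
end

section
/- For every natural number M ≥ 2, the inequality (4·e^{−1/2} − 1)/M > 1/(2·√(M − 1)) holds if and only if M ≤ 6. -/
lemma exp_half_sq : Real.exp (-(1/2 : ℝ)) * Real.exp (-(1/2 : ℝ)) * Real.exp 1 = 1 := by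
  rw [← Real.exp_add, ← Real.exp_add]
  norm_num

lemma exp_half_lb : (0.6065 : ℝ) < Real.exp (-(1/2 : ℝ)) := by
  set x := Real.exp (-(1/2 : ℝ)) with hxdef
  have hx : (0:ℝ) < x := Real.exp_pos _
  have hsq := exp_half_sq
  by_contra h
  push_neg at h
  have h2 : x * x ≤ 0.6065 * 0.6065 := mul_le_mul h h hx.le (by norm_num)
  nlinarith [Real.exp_one_lt_d9, Real.exp_pos 1, hsq]

lemma exp_half_ub : Real.exp (-(1/2 : ℝ)) < (0.6066 : ℝ) := by
  set x := Real.exp (-(1/2 : ℝ)) with hxdef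
  have hx : (0:ℝ) < x := Real.exp_pos _
  have hsq := exp_half_sq
  by_contra h
  push_neg at h
  have h2 : 0.6066 * 0.6066 ≤ x * x := mul_le_mul h h (by norm_num) hx.le
  nlinarith [Real.exp_one_gt_d9, Real.exp_pos 1, hsq]

/-- **GME detection window for W states (paper's Corollary 1 applied to `|W_M⟩`).**
For integers `M ≥ 2`, `(4e^{−1/2} − 1)/M > 1/(2√(M−1))` holds iff `M ≤ 6`. -/
theorem stmt6 (M : ℕ) (hM : 2 ≤ M) :
    (4 * Real.exp (-(1 / 2)) - 1) / (M : ℝ) > 1 / (2 * Real.sqrt ((M : ℝ) - 1)) ↔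
      M ≤ 6 := by
  have hM2 : (2:ℝ) ≤ (M:ℝ) := by exact_mod_cast hM
  have hMpos : (0:ℝ) < (M:ℝ) := by linarith
  have hM1 : (0:ℝ) ≤ (M:ℝ) - 1 := by linarith
  set c : ℝ := 4 * Real.exp (-(1/2 : ℝ)) - 1 with hc
  have hclb : (1.426 : ℝ) < c := by
    have := exp_half_lb; rw [hc]; linarith
  have hcub : c < (1.4264 : ℝ) := by
    have := exp_half_ub; rw [hc]; linarith
  have hcpos : (0:ℝ) < c := lt_trans (by norm_num) hclb
  have hcsqlb : (2.033:ℝ) < c^2 := by nlinarith [mul_self_lt_mul_self (by norm_num : (0:ℝ) ≤ 1.426) hclb]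
  have hcsqub : c^2 < (2.035:ℝ) := by nlinarith [mul_self_lt_mul_self hcpos.le hcub]
  set s : ℝ := Real.sqrt ((M:ℝ) - 1) with hs
  have hspos : (0:ℝ) < s := Real.sqrt_pos.mpr (by linarith)
  have hs2 : s ^ 2 = (M:ℝ) - 1 := Real.sq_sqrt hM1
  have hform : (4 * Real.exp (-(1/2 : ℝ)) - 1) / (M : ℝ) = c / (M:ℝ) := by rw [hc]
  clear_value c s
  have h2s : (0:ℝ) < 2 * s := by linarith
  rw [gt_iff_lt, div_lt_div_iff₀ h2s hMpos]
  -- now: 1 * M < c * (2 * s) ↔ M ≤ 6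
  constructor
  · intro h
    by_contra h7
    push_neg at h7
    have hM7 : (7:ℝ) ≤ (M:ℝ) := by exact_mod_cast h7
    have h' : (M:ℝ) < 2 * c * s := by nlinarith
    have hsq : (M:ℝ)^2 < (2*c*s)^2 := by
      apply pow_lt_pow_left₀ h' (by positivity) (by norm_num)
    have hx : (2*c*s)^2 = 4 * c^2 * ((M:ℝ) - 1) := by
      rw [mul_pow, mul_pow]; rw [hs2]; ring
    rw [hx] at hsq
    nlinarith [mul_nonneg (show (0:ℝ) ≤ (M:ℝ) - 7 by linarith)
        (show (0:ℝ) ≤ 6*(M:ℝ) - 7 by linarith),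
      mul_nonneg (show (0:ℝ) ≤ (M:ℝ) - 1 by linarith)
        (show (0:ℝ) ≤ 49/24 - c^2 by linarith)]
  · intro h6
    have hM6 : (M:ℝ) ≤ 6 := by exact_mod_cast h6
    have hsqlt : (M:ℝ)^2 < 4 * c^2 * ((M:ℝ) - 1) := by
      nlinarith [mul_nonneg (show (0:ℝ) ≤ 6 - (M:ℝ) by linarith)
          (show (0:ℝ) ≤ (M:ℝ) - 2 by linarith),
        mul_nonneg (show (0:ℝ) ≤ (M:ℝ) - 1 by linarith)
          (show (0:ℝ) ≤ c^2 - 2.033 by linarith)]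
    have hx : (2*c*s)^2 = 4 * c^2 * ((M:ℝ) - 1) := by
      rw [mul_pow, mul_pow]; rw [hs2]; ring
    have h' : (M:ℝ) < 2*c*s := by
      apply lt_of_pow_lt_pow_left₀ 2 (by positivity)
      rw [hx]; exact hsqlt
    nlinarith
end

section
/- For every real number M > 0 and every real η with 0 ≤ η ≤ 1/2, (2/π) ∫_{ℝ²} e^{−2M(x² + y²)} · |4M(1 − η)(x² + y²) + 2η − 1| dx dy = (1/M)·(4(1 − η)·e^{−(1 − 2η)/(2(1 − η))} − 1). -/
/-!
Polar coordinates followed by `t = r²` turn the integral into `π ∫₀^∞ e^{-2Mt} |a t + c| dt`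
with `a = 4M(1-η) > 0` and `c = 2η - 1 ≤ 0`. The linear factor changes sign only at
`t₀ = -c/a ≥ 0`, and `-e^{-st}((a t + c)/s + a/s²)` is a primitive of `e^{-st}(a t + c)`,
so the integral is `F(0) - 2F(t₀)` for that primitive `F`.
-/

open MeasureTheory Set Filter Topology Real

theorem integral_comp_sq_add_sq {E : Type*} [NormedAddCommGroup E] [NormedSpace ℝ E]
    (g : ℝ → E) : ∫ p : ℝ × ℝ, g (p.1 ^ 2 + p.2 ^ 2) = π • ∫ t in Ioi 0, g t := by
  have hpolar : ∫ p : ℝ × ℝ, g (p.1 ^ 2 + p.2 ^ 2) =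
      (2 * π) • ∫ r in Ioi 0, r • g (r ^ 2) := by
    have hradial : ∀ p : ℝ × ℝ, p.1 • g ((polarCoord.symm p).1 ^ 2 + (polarCoord.symm p).2 ^ 2)
        = p.1 • g (p.1 ^ 2) := fun p => by
      simp only [polarCoord_symm_apply, mul_pow, ← mul_add, cos_sq_add_sin_sq, mul_one]
    rw [← integral_comp_polarCoord_symm, polarCoord_target, Measure.volume_eq_prod,
      ← Measure.prod_restrict]
    simp only [hradial]
    rw [integral_fun_fst (fun r : ℝ => r • g (r ^ 2)), measureReal_restrict_apply_univ,
      Real.volume_real_Ioo_of_le (by linarith [pi_pos])]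
    congr 1; ring
  have hsubst : ∫ r in Ioi (0 : ℝ), r • g (r ^ 2) = (1 / 2 : ℝ) • ∫ t in Ioi 0, g t := by
    rw [← integral_comp_rpow_Ioi g two_ne_zero, ← integral_smul]
    refine setIntegral_congr_fun measurableSet_Ioi fun r _ => ?_
    norm_num [smul_smul]
    congr 1; ring
  rw [hpolar, hsubst, smul_smul]
  congr 1; ring

section ExpLinear

variable (s a c : ℝ)

theorem hasDerivAt_exp_neg_mul_mul_linear (hs : s ≠ 0) (t : ℝ) :
    HasDerivAt (fun t => -(exp (-(s * t)) * ((a * t + c) / s + a / s ^ 2)))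
      (exp (-(s * t)) * (a * t + c)) t := by
  have hexp : HasDerivAt (fun t => exp (-(s * t))) (exp (-(s * t)) * -s) t := by
    simpa using ((hasDerivAt_id t).const_mul s).neg.exp
  have hlin : HasDerivAt (fun t => (a * t + c) / s + a / s ^ 2) (a / s) t := by
    simpa using (((hasDerivAt_id t).const_mul a).add_const c).div_const s |>.add_const (a / s ^ 2)
  refine (hexp.mul hlin).neg.congr_deriv ?_
  field_simp
  ring

theorem tendsto_exp_neg_mul_mul_linear (hs : 0 < s) :
    Tendsto (fun t => -(exp (-(s * t)) * ((a * t + c) / s + a / s ^ 2))) atTop (𝓝 0) := by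
  have hst : Tendsto (fun t => s * t) atTop atTop := tendsto_id.const_mul_atTop hs
  have h1 : Tendsto (fun t => s * t * exp (-(s * t))) atTop (𝓝 0) := by
    simpa [Function.comp_def] using (tendsto_pow_mul_exp_neg_atTop_nhds_zero 1).comp hst
  have h0 : Tendsto (fun t => exp (-(s * t))) atTop (𝓝 0) :=
    tendsto_exp_atBot.comp (tendsto_neg_atTop_atBot.comp hst)
  convert ((h1.const_mul (a / s ^ 2)).add (h0.const_mul (c / s + a / s ^ 2))).neg using 2
  · field_simp
    ring
  · simp

theorem integral_exp_neg_mul_mul_abs_linear (hs : 0 < s) (ha : 0 < a) (hc : c ≤ 0) :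
    ∫ t in Ioi 0, exp (-(s * t)) * |a * t + c| = (2 * a * exp (s * c / a) - a - s * c) / s ^ 2 := by
  set F := fun t => -(exp (-(s * t)) * ((a * t + c) / s + a / s ^ 2)) with hF
  set t₀ := -c / a with ht₀
  have ht₀_nonneg : 0 ≤ t₀ := div_nonneg (neg_nonneg.2 hc) ha.le
  have hroot : a * t₀ + c = 0 := by rw [ht₀]; field_simp; ring
  have hF' := hasDerivAt_exp_neg_mul_mul_linear s a c hs.ne'
  have hderiv_left : ∀ t ∈ uIcc 0 t₀, HasDerivAt (-F) (exp (-(s * t)) * |a * t + c|) t := by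
    intro t ht
    have ht' : t ≤ t₀ := (uIcc_of_le ht₀_nonneg ▸ ht).2
    refine (hF' t).neg.congr_deriv ?_
    rw [abs_of_nonpos (by nlinarith)]
    ring
  have hderiv_right : ∀ t ∈ Ici t₀, HasDerivAt F (exp (-(s * t)) * |a * t + c|) t := by
    intro t ht
    refine (hF' t).congr_deriv ?_
    rw [abs_of_nonneg (by nlinarith [mem_Ici.1 ht])]
  have hnonneg : ∀ t ∈ Ioi t₀, 0 ≤ exp (-(s * t)) * |a * t + c| := fun t _ => by positivity
  have hlim := tendsto_exp_neg_mul_mul_linear s a c hs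
  have hleft : ∫ t in Ioc 0 t₀, exp (-(s * t)) * |a * t + c| = F 0 - F t₀ := by
    rw [← intervalIntegral.integral_of_le ht₀_nonneg,
      intervalIntegral.integral_eq_sub_of_hasDerivAt hderiv_left
        (Continuous.intervalIntegrable (by fun_prop) _ _)]
    simp only [Pi.neg_apply]
    ring
  rw [← Ioc_union_Ioi_eq_Ioi ht₀_nonneg, setIntegral_union Ioc_disjoint_Ioi_same measurableSet_Ioi
    (Continuous.integrableOn_Ioc (by fun_prop))
    (integrableOn_Ioi_deriv_of_nonneg' hderiv_right hnonneg hlim), hleft,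
    integral_Ioi_of_hasDerivAt_of_nonneg' hderiv_right hnonneg hlim]
  have hexp : -(s * t₀) = s * c / a := by rw [ht₀]; ring
  simp only [hF, hroot, hexp, mul_zero, neg_zero, exp_zero]
  field_simp
  ring

end ExpLinear

theorem stmt7_general (M : ℝ) (hM : 0 < M) (η : ℝ) (hη1 : η ≤ 1 / 2) :
    (2 / Real.pi) * ∫ p : ℝ × ℝ,
        Real.exp (-(2 * M * (p.1 ^ 2 + p.2 ^ 2))) *
          |4 * M * (1 - η) * (p.1 ^ 2 + p.2 ^ 2) + 2 * η - 1| =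
      (1 / M) * (4 * (1 - η) * Real.exp (-((1 - 2 * η) / (2 * (1 - η)))) - 1) := by
  have hη : 0 < 1 - η := by linarith
  have hradial := integral_comp_sq_add_sq
    fun t => exp (-(2 * M * t)) * |4 * M * (1 - η) * t + (2 * η - 1)|
  have hline := integral_exp_neg_mul_mul_abs_linear (2 * M) (4 * M * (1 - η)) (2 * η - 1)
    (by positivity) (by positivity) (by linarith)
  have hexp : 2 * M * (2 * η - 1) / (4 * M * (1 - η)) = -((1 - 2 * η) / (2 * (1 - η))) := by
    field_simp
    ring
  simp only [← add_sub_assoc, smul_eq_mul] at hradial hline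
  rw [hradial, hline, hexp]
  field_simp
  ring

/-- **Absolute Wigner volume of the lossy `M`-mode W state on the diagonal slice.**
For `M > 0` and loss parameter `0 ≤ η ≤ 1/2`,
`(2/π) ∫_{ℝ²} e^{−2M(x²+y²)} |4M(1−η)(x²+y²) + 2η − 1| dx dy
  = (1/M)(4(1−η) e^{−(1−2η)/(2(1−η))} − 1)`. -/
theorem stmt7 (M : ℝ) (hM : 0 < M) (η : ℝ) (hη0 : 0 ≤ η) (hη1 : η ≤ 1 / 2) :
    (2 / Real.pi) * ∫ p : ℝ × ℝ,
        Real.exp (-(2 * M * (p.1 ^ 2 + p.2 ^ 2))) *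
          |4 * M * (1 - η) * (p.1 ^ 2 + p.2 ^ 2) + 2 * η - 1| =
      (1 / M) * (4 * (1 - η) * Real.exp (-((1 - 2 * η) / (2 * (1 - η)))) - 1) :=
  stmt7_general M hM η hη1
end

section
/- For every natural number M with 3 ≤ M ≤ 7, letting d := √((M − 2)/(2(M − 1))), the inequality 1/M − (16(M − 1)/(e·M²))·sinh(d) + (8·√(2(M − 2)(M − 1))/(e·M²))·cosh(d) > 1/(2·√(M − 1)) holds; moreover, it fails for M = 8. -/
/-- The absolute Wigner volume `V_{2D}(|D₂^M⟩; ℂ)` of the two-excitation Dicke state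
along the diagonal two-dimensional phase-space slice, as computed in the paper. -/
noncomputable def dickeVol (M : ℕ) : ℝ :=
  1 / (M : ℝ)
    - (16 * ((M : ℝ) - 1) / (Real.exp 1 * (M : ℝ) ^ 2)) *
        Real.sinh (Real.sqrt (((M : ℝ) - 2) / (2 * ((M : ℝ) - 1))))
    + (8 * Real.sqrt (2 * ((M : ℝ) - 2) * ((M : ℝ) - 1)) / (Real.exp 1 * (M : ℝ) ^ 2)) *
        Real.cosh (Real.sqrt (((M : ℝ) - 2) / (2 * ((M : ℝ) - 1))))

/-! Since `√(2(M-2)(M-1)) = 2(M-1)·d`, the volume collapses to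
`1/M + 16(M-1)/(e M²) · (d cosh d - sinh d)`. The function `x cosh x - sinh x` has the
nonnegative Taylor coefficients `2(n+1)/(2n+3)!` in front of `x^(2n+3)`, so for `x ≥ 0` it lies
between its leading term `x³/3` and, comparing coefficients with `exp`, `x³/3 · exp(x²/10)`.
These two bounds are sharp enough that two-digit rational brackets of the square roots and the
nine-digit bounds on `e` decide every case `3 ≤ M ≤ 8`. -/

open Real Nat

namespace Nat

theorem six_mul_succ_mul_ten_pow_mul_factorial_le (n : ℕ) :
    6 * (n + 1) * 10 ^ n * n ! ≤ (2 * n + 3)! := by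
  induction n with
  | zero => decide
  | succ n ih =>
    calc 6 * (n + 1 + 1) * 10 ^ (n + 1) * (n + 1)!
        = 10 * (n + 2) * (6 * (n + 1) * 10 ^ n * n !) := by rw [factorial_succ, pow_succ]; ring
      _ ≤ (2 * n + 5) * (2 * n + 4) * (2 * n + 3)! := Nat.mul_le_mul (by nlinarith) ih
      _ = (2 * (n + 1) + 3)! := by
        rw [show 2 * (n + 1) + 3 = 2 * n + 3 + 1 + 1 by ring, factorial_succ (2 * n + 3 + 1),
          factorial_succ (2 * n + 3)]
        ring

end Nat

namespace Real

theorem hasSum_mul_cosh_sub_sinh (x : ℝ) :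
    HasSum (fun n : ℕ ↦ 2 * (n + 1) * x ^ (2 * n + 3) / (2 * n + 3)!)
      (x * cosh x - sinh x) := by
  have h := ((hasSum_cosh x).mul_left x).sub (hasSum_sinh x)
  rw [← hasSum_nat_add_iff' 1] at h
  have hterm (n : ℕ) : x * (x ^ (2 * (n + 1)) / (2 * (n + 1))!) - x ^ (2 * (n + 1) + 1) /
      (2 * (n + 1) + 1)! = 2 * (n + 1) * x ^ (2 * n + 3) / (2 * n + 3)! := by
    rw [show 2 * (n + 1) + 1 = 2 * n + 3 by ring, show 2 * (n + 1) = 2 * n + 2 by ring,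
      factorial_succ (2 * n + 2)]
    push_cast
    field_simp
    ring
  simp only [hterm, Finset.range_one, Finset.sum_singleton] at h
  simpa using h

theorem cube_div_three_le_mul_cosh_sub_sinh {x : ℝ} (hx : 0 ≤ x) :
    x ^ 3 / 3 ≤ x * cosh x - sinh x := by
  have h := sum_le_hasSum (Finset.range 1) (fun n _ ↦ by positivity) (hasSum_mul_cosh_sub_sinh x)
  norm_num [factorial] at h
  linarith

theorem mul_cosh_sub_sinh_le {x : ℝ} (hx : 0 ≤ x) :
    x * cosh x - sinh x ≤ x ^ 3 / 3 * exp (x ^ 2 / 10) := by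
  have hexp : HasSum (fun n : ℕ ↦ (x ^ 2 / 10) ^ n / n !) (exp (x ^ 2 / 10)) := by
    rw [exp_eq_exp_ℝ]
    exact NormedSpace.expSeries_div_hasSum_exp _
  refine hasSum_le (fun n ↦ ?_) (hasSum_mul_cosh_sub_sinh x) (hexp.mul_left (x ^ 3 / 3))
  have hfac : (6 * (n + 1) * 10 ^ n * n ! : ℝ) ≤ (2 * n + 3)! := by
    exact_mod_cast six_mul_succ_mul_ten_pow_mul_factorial_le n
  calc 2 * (n + 1) * x ^ (2 * n + 3) / (2 * n + 3)!
      = x ^ (2 * n + 3) * (2 * (n + 1) / (2 * n + 3)!) := by ring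
    _ ≤ x ^ (2 * n + 3) * (1 / (3 * 10 ^ n * n !)) := by
      refine mul_le_mul_of_nonneg_left ?_ (by positivity)
      rw [div_le_div_iff₀ (by positivity) (by positivity)]
      linarith
    _ = x ^ 3 / 3 * ((x ^ 2 / 10) ^ n / n !) := by rw [div_pow]; ring

end Real

theorem one_le_cast_sub_one {M : ℕ} (hM : 2 ≤ M) : (1 : ℝ) ≤ M - 1 := by
  have : (2 : ℝ) ≤ M := by exact_mod_cast hM
  linarith

/-- The square of the argument `d` of `sinh` and `cosh` in `dickeVol`. -/
noncomputable def dickeRatio (M : ℕ) : ℝ := ((M : ℝ) - 2) / (2 * ((M : ℝ) - 1))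

theorem dickeRatio_nonneg {M : ℕ} (hM : 2 ≤ M) : 0 ≤ dickeRatio M := by
  have hM' := one_le_cast_sub_one hM
  unfold dickeRatio
  apply div_nonneg <;> linarith

theorem dickeRatio_lt_one {M : ℕ} (hM : 2 ≤ M) : dickeRatio M < 1 := by
  have hM' := one_le_cast_sub_one hM
  unfold dickeRatio
  rw [div_lt_one (by linarith)]
  linarith

theorem dickeVol_eq {M : ℕ} (hM : 2 ≤ M) :
    dickeVol M = 1 / M + 16 * (M - 1) / (exp 1 * M ^ 2) *
      (√(dickeRatio M) * cosh √(dickeRatio M) - sinh √(dickeRatio M)) := by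
  have hM' := one_le_cast_sub_one hM
  have hsqrt : √(2 * ((M : ℝ) - 2) * ((M : ℝ) - 1)) = 2 * (M - 1) * √(dickeRatio M) := by
    rw [show 2 * ((M : ℝ) - 2) * ((M : ℝ) - 1) = (2 * (M - 1)) ^ 2 * dickeRatio M by
        unfold dickeRatio; field_simp,
      sqrt_mul (by positivity), sqrt_sq (by positivity)]
  rw [dickeVol, hsqrt, ← dickeRatio]
  ring

theorem dickeVol_ge {M : ℕ} (hM : 2 ≤ M) :
    1 / M + 16 * (M - 1) / (exp 1 * M ^ 2) * (dickeRatio M * √(dickeRatio M) / 3) ≤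
      dickeVol M := by
  have hM' := one_le_cast_sub_one hM
  have h := cube_div_three_le_mul_cosh_sub_sinh (sqrt_nonneg (dickeRatio M))
  rw [pow_succ, sq_sqrt (dickeRatio_nonneg hM)] at h
  rw [dickeVol_eq hM]
  gcongr

theorem dickeVol_le {M : ℕ} (hM : 2 ≤ M) :
    dickeVol M ≤ 1 / M + 16 * (M - 1) / (exp 1 * M ^ 2) *
      (dickeRatio M * √(dickeRatio M) / 3 / (1 - dickeRatio M / 10)) := by
  have hM' := one_le_cast_sub_one hM
  have hq := dickeRatio_nonneg hM
  have h := mul_cosh_sub_sinh_le (sqrt_nonneg (dickeRatio M))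
  have hexp := exp_bound_div_one_sub_of_interval (x := dickeRatio M / 10) (by positivity)
    (by linarith [dickeRatio_lt_one hM])
  rw [pow_succ, sq_sqrt hq] at h
  rw [dickeVol_eq hM, div_eq_mul_one_div _ (1 - _)]
  gcongr
  exact h.trans (by gcongr)

theorem lt_dickeVol_of_sq_bounds {M : ℕ} (hM : 2 ≤ M) {a b : ℝ}
    (ha2 : a ^ 2 ≤ dickeRatio M) (hb : 0 < b) (hb2 : b ^ 2 ≤ M - 1)
    (h : 1 / (2 * b) < 1 / M + 16 * (M - 1) / (2.7182818286 * M ^ 2) * (dickeRatio M * a / 3)) :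
    1 / (2 * √((M : ℝ) - 1)) < dickeVol M := by
  have hM' := one_le_cast_sub_one hM
  have ha' : a ≤ √(dickeRatio M) := le_sqrt_of_sq_le ha2
  have hb' : b ≤ √((M : ℝ) - 1) := le_sqrt_of_sq_le hb2
  have hq := dickeRatio_nonneg hM
  calc 1 / (2 * √((M : ℝ) - 1)) ≤ 1 / (2 * b) := by gcongr
    _ < 1 / M + 16 * (M - 1) / (2.7182818286 * M ^ 2) * (dickeRatio M * a / 3) := h
    _ ≤ 1 / M + 16 * (M - 1) / (2.7182818286 * M ^ 2) *
        (dickeRatio M * √(dickeRatio M) / 3) := by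
      gcongr
    _ ≤ 1 / M + 16 * (M - 1) / (exp 1 * M ^ 2) * (dickeRatio M * √(dickeRatio M) / 3) := by
      gcongr
      exact exp_one_lt_d9.le
    _ ≤ dickeVol M := dickeVol_ge hM

theorem dickeVol_le_of_sq_bounds {M : ℕ} (hM : 2 ≤ M) {a b : ℝ} (ha : 0 ≤ a)
    (ha2 : dickeRatio M ≤ a ^ 2) (hb : 0 ≤ b) (hb2 : M - 1 ≤ b ^ 2)
    (h : 1 / M + 16 * (M - 1) / (2.7182818283 * M ^ 2) * (dickeRatio M * a / 3 /
      (1 - dickeRatio M / 10)) ≤ 1 / (2 * b)) :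
    dickeVol M ≤ 1 / (2 * √((M : ℝ) - 1)) := by
  have hM' := one_le_cast_sub_one hM
  have ha' : √(dickeRatio M) ≤ a := sqrt_le_iff.2 ⟨ha, ha2⟩
  have hb' : √((M : ℝ) - 1) ≤ b := sqrt_le_iff.2 ⟨hb, hb2⟩
  have hq := dickeRatio_nonneg hM
  have hden : 0 < 1 - dickeRatio M / 10 := by linarith [dickeRatio_lt_one hM]
  calc dickeVol M ≤ 1 / M + 16 * (M - 1) / (exp 1 * M ^ 2) *
        (dickeRatio M * √(dickeRatio M) / 3 / (1 - dickeRatio M / 10)) := dickeVol_le hM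
    _ ≤ 1 / M + 16 * (M - 1) / (2.7182818283 * M ^ 2) * (dickeRatio M * a / 3 /
        (1 - dickeRatio M / 10)) := by
      gcongr
      exact exp_one_gt_d9.le
    _ ≤ 1 / (2 * b) := h
    _ ≤ 1 / (2 * √((M : ℝ) - 1)) := by gcongr

/-- **GME detection window for two-excitation Dicke states.** The criterion
`V_{2D}(|D₂^M⟩) > 1/(2√(M−1))` holds for all `3 ≤ M ≤ 7`, and fails for `M = 8`. -/
theorem stmt10 :
    (∀ M : ℕ, 3 ≤ M → M ≤ 7 → dickeVol M > 1 / (2 * Real.sqrt ((M : ℝ) - 1))) ∧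
      ¬ (dickeVol 8 > 1 / (2 * Real.sqrt ((8 : ℝ) - 1))) := by
  refine ⟨fun M hM3 hM7 ↦ ?_, not_lt.2 ?_⟩
  · interval_cases M
    · refine lt_dickeVol_of_sq_bounds (a := 1 / 2) (b := 141 / 100) ?_ ?_ ?_ ?_ ?_ <;>
        norm_num [dickeRatio]
    · refine lt_dickeVol_of_sq_bounds (a := 57 / 100) (b := 173 / 100) ?_ ?_ ?_ ?_ ?_ <;>
        norm_num [dickeRatio]
    · refine lt_dickeVol_of_sq_bounds (a := 61 / 100) (b := 2) ?_ ?_ ?_ ?_ ?_ <;>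
        norm_num [dickeRatio]
    · refine lt_dickeVol_of_sq_bounds (a := 63 / 100) (b := 223 / 100) ?_ ?_ ?_ ?_ ?_ <;>
        norm_num [dickeRatio]
    · refine lt_dickeVol_of_sq_bounds (a := 16 / 25) (b := 61 / 25) ?_ ?_ ?_ ?_ ?_ <;>
        norm_num [dickeRatio]
  · have h : dickeVol 8 ≤ 1 / (2 * √(((8 : ℕ) : ℝ) - 1)) := by
      refine dickeVol_le_of_sq_bounds (a := 33 / 50) (b := 53 / 20) ?_ ?_ ?_ ?_ ?_ ?_ <;>
        norm_num [dickeRatio]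
    exact_mod_cast h
end

section
/- The inequality (1/π) ∫_{ℝ²} e^{−6(x² + y²)} · |1 − 30(x² + y²) + 108(x² + y²)²| dx dy > 1/(2·√2) holds. -/
open MeasureTheory Real Set Filter Topology

/-!
In polar coordinates, with `s = x² + y²`, the left-hand side becomes `∫₀^∞ |g s| ds` for
`g s = e^{-6s} (1 - 30 s + 108 s²)`, which has the explicit primitive
`-e^{-6s} (18 s² + s + 1/3)`, so `∫₀^∞ g = 1/3`. For every interval `I`,
`∫ |g| ≥ ∫ g - 2 ∫_I g`; taking for `I = [1/25, 6/25]` an approximation of the interval between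
the roots of `1 - 30 s + 108 s²`, where `g < 0`, gives a lower bound `≈ 0.46`. Elementary bounds
on `e^{-6/25}` and `e^{-36/25}` show that it exceeds `3/8 > 1/(2√2)`.
-/

theorem integral_comp_fst_sq_add_snd_sq (k : ℝ → ℝ) :
    ∫ p : ℝ × ℝ, k (p.1 ^ 2 + p.2 ^ 2) = π * ∫ s in Ioi 0, k s := by
  have hpolar (p : ℝ × ℝ) :
      (polarCoord.symm p).1 ^ 2 + (polarCoord.symm p).2 ^ 2 = p.1 ^ 2 := by
    simp only [polarCoord_symm_apply, mul_pow, ← mul_add, cos_sq_add_sin_sq, mul_one]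
  have hsubst : ∫ s in Ioi 0, k s = 2 * ∫ r in Ioi (0 : ℝ), r * k (r ^ 2) := by
    rw [← integral_comp_rpow_Ioi_of_pos two_pos, ← integral_const_mul]
    refine setIntegral_congr_fun measurableSet_Ioi fun r _ => ?_
    norm_num [rpow_two]
    ring
  rw [← integral_comp_polarCoord_symm, polarCoord_target, Measure.volume_eq_prod]
  simp only [hpolar, smul_eq_mul]
  have hprod := setIntegral_prod_mul (fun r : ℝ => r * k (r ^ 2)) (fun _ => (1 : ℝ))
    (Ioi 0) (Ioo (-π) π) (μ := volume) (ν := volume)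
  simp only [mul_one] at hprod
  rw [hprod, hsubst, setIntegral_const, Real.volume_real_Ioo_of_le (by linarith [pi_pos]),
    smul_eq_mul]
  ring

theorem integral_sub_two_mul_setIntegral_le_integral_abs {α : Type*} [MeasurableSpace α]
    {μ : Measure α} {f : α → ℝ} {s : Set α} (hf : Integrable f μ) (hs : MeasurableSet s) :
    ∫ x, f x ∂μ - 2 * ∫ x in s, f x ∂μ ≤ ∫ x, |f x| ∂μ := by
  rw [← integral_add_compl hs hf, ← integral_add_compl hs hf.abs]
  have hs_abs := abs_le.mp (abs_integral_le_integral_abs (f := f) (μ := μ.restrict s))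
  have hsc_abs := abs_le.mp (abs_integral_le_integral_abs (f := f) (μ := μ.restrict sᶜ))
  linarith [hs_abs.1, hsc_abs.2]

theorem integrableOn_pow_mul_exp_neg_mul_Ioi (n : ℕ) {b : ℝ} (hb : 0 < b) :
    IntegrableOn (fun x : ℝ => x ^ n * exp (-(b * x))) (Ioi 0) := by
  simpa [rpow_natCast, neg_mul] using
    integrableOn_rpow_mul_exp_neg_mul_rpow (s := n) (p := 1)
      (by linarith [n.cast_nonneg (α := ℝ)]) one_pos hb

theorem tendsto_pow_mul_exp_neg_mul_atTop_nhds_zero (n : ℕ) {b : ℝ} (hb : 0 < b) :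
    Tendsto (fun x : ℝ => x ^ n * exp (-(b * x))) atTop (𝓝 0) := by
  simpa [rpow_natCast, neg_mul] using tendsto_rpow_mul_exp_neg_mul_atTop_nhds_zero n b hb

/-- Up to the factor `4 / π³`, the Wigner function of `|ψ₂⟩` at `α⃗ = (α, α, α)`, with `s = |α|²`. -/
noncomputable def wignerProfile (s : ℝ) : ℝ := exp (-(6 * s)) * (1 - 30 * s + 108 * s ^ 2)

noncomputable def wignerProfilePrimitive (s : ℝ) : ℝ :=
  -(exp (-(6 * s)) * (18 * s ^ 2 + s + 1 / 3))

theorem hasDerivAt_wignerProfilePrimitive (s : ℝ) :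
    HasDerivAt wignerProfilePrimitive (wignerProfile s) s := by
  have hexp : HasDerivAt (fun s : ℝ => exp (-(6 * s))) (exp (-(6 * s)) * -6) s :=
    ((hasDerivAt_const_mul (6 : ℝ)).neg (x := s)).exp
  have hpoly : HasDerivAt (fun s : ℝ => 18 * s ^ 2 + s + 1 / 3) (36 * s + 1) s :=
    ((((hasDerivAt_pow 2 s).const_mul 18).add (hasDerivAt_id' s)).add_const _).congr_deriv
      (by ring)
  exact (hexp.mul hpoly).neg.congr_deriv (by simp only [wignerProfile]; ring)

theorem integrableOn_wignerProfile : IntegrableOn wignerProfile (Ioi 0) := by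
  have h (n : ℕ) := integrableOn_pow_mul_exp_neg_mul_Ioi n (b := 6) (by norm_num)
  refine (((h 0).sub ((h 1).const_mul 30)).add ((h 2).const_mul 108)).congr_fun
    (fun s _ => ?_) measurableSet_Ioi
  simp only [wignerProfile, Pi.add_apply, Pi.sub_apply]
  ring

theorem tendsto_wignerProfilePrimitive_atTop :
    Tendsto wignerProfilePrimitive atTop (𝓝 0) := by
  have h (n : ℕ) := tendsto_pow_mul_exp_neg_mul_atTop_nhds_zero n (b := 6) (by norm_num)
  have hsum := (((h 2).const_mul 18).add (h 1)).add ((h 0).const_mul (1 / 3)) |>.neg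
  simp only [mul_zero, add_zero, neg_zero] at hsum
  convert hsum using 2 with s
  simp only [wignerProfilePrimitive]
  ring

theorem integral_Ioi_wignerProfile : ∫ s in Ioi 0, wignerProfile s = 1 / 3 := by
  rw [integral_Ioi_of_hasDerivAt_of_tendsto' (fun s _ => hasDerivAt_wignerProfilePrimitive s)
    integrableOn_wignerProfile tendsto_wignerProfilePrimitive_atTop]
  simp [wignerProfilePrimitive]

theorem integral_Icc_wignerProfile {a b : ℝ} (hab : a ≤ b) :
    ∫ s in Icc a b, wignerProfile s = wignerProfilePrimitive b - wignerProfilePrimitive a := by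
  rw [integral_Icc_eq_integral_Ioc, ← intervalIntegral.integral_of_le hab]
  exact intervalIntegral.integral_eq_sub_of_hasDerivAt
    (fun s _ => hasDerivAt_wignerProfilePrimitive s)
    ((by unfold wignerProfile; fun_prop : Continuous wignerProfile).intervalIntegrable a b)

theorem one_div_two_mul_sqrt_two_lt : 1 / (2 * √2) < 3 / 8 := by
  have h : (4 / 3 : ℝ) < √2 := by
    rw [lt_sqrt (by norm_num)]
    norm_num
  rw [div_lt_div_iff₀ (by positivity) (by norm_num)]
  linarith

theorem three_eighths_lt_one_third_sub_two_mul_integral_Icc_wignerProfile :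
    3 / 8 < 1 / 3 - 2 * ∫ s in Icc (1 / 25) (6 / 25), wignerProfile s := by
  have hupper : exp (-(6 * (1 / 25))) ≤ 25 / 31 := by
    rw [exp_neg, inv_le_comm₀ (exp_pos _) (by norm_num)]
    linarith [add_one_le_exp (6 * (1 / 25) : ℝ)]
  have hlower : (1 - 9 / 100 : ℝ) ^ 16 ≤ exp (-(6 * (6 / 25))) := by
    convert one_sub_div_pow_le_exp_neg (n := 16) (t := 6 * (6 / 25)) (by norm_num) using 2
    norm_num
  rw [integral_Icc_wignerProfile (by norm_num)]
  simp only [wignerProfilePrimitive]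
  linarith

/-- **GME detection of the tripartite state `|ψ₂⟩` (paper's Corollary 1, `M = 3`).**
`(1/π) ∫_{ℝ²} e^{−6(x²+y²)} |1 − 30(x²+y²) + 108(x²+y²)²| dx dy > 1/(2√2)`. -/
theorem stmt11 :
    (1 / Real.pi) * ∫ p : ℝ × ℝ,
        Real.exp (-(6 * (p.1 ^ 2 + p.2 ^ 2))) *
          |1 - 30 * (p.1 ^ 2 + p.2 ^ 2) + 108 * (p.1 ^ 2 + p.2 ^ 2) ^ 2| >
      1 / (2 * Real.sqrt 2) := by
  have hIcc : Icc (1 / 25 : ℝ) (6 / 25) ⊆ Ioi 0 := fun s hs => lt_of_lt_of_le (by norm_num) hs.1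
  have hbound := integral_sub_two_mul_setIntegral_le_integral_abs integrableOn_wignerProfile
    (measurableSet_Icc (a := 1 / 25) (b := 6 / 25))
  rw [Measure.restrict_restrict measurableSet_Icc, inter_eq_left.mpr hIcc,
    integral_Ioi_wignerProfile] at hbound
  rw [integral_comp_fst_sq_add_snd_sq fun s => exp (-(6 * s)) * |1 - 30 * s + 108 * s ^ 2|,
    ← mul_assoc, one_div_mul_cancel pi_ne_zero, one_mul]
  have habs (s : ℝ) : |wignerProfile s| = exp (-(6 * s)) * |1 - 30 * s + 108 * s ^ 2| := by
    rw [wignerProfile, abs_mul, abs_of_pos (exp_pos _)]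
  simp only [habs] at hbound
  linarith [one_div_two_mul_sqrt_two_lt,
    three_eighths_lt_one_third_sub_two_mul_integral_Icc_wignerProfile]
end

section
/- Let a, b ≥ 0 be real numbers and let f : ℝ² → ℝ be differentiable with ‖∇f(x)‖ ≤ a + b‖x‖ for all x ∈ ℝ², where ‖·‖ is the Euclidean norm. Then for every point x₀ ∈ ℝ² and every Δ > 0, the integral of |f| over the closed axis-aligned square of side length Δ centred at x₀ satisfies ∫_{Q_Δ(x₀)} |f(x)| dx ≥ Δ²·|f(x₀)| − (Δ³/√2)·(a + b‖x₀‖) − (b/2)·Δ⁴. -/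
/-!
Every point of the square lies within `Δ/√2` of `x₀`, so on the square
`‖∇f‖ ≤ a + b (‖x₀‖ + Δ/√2)`, and the mean value inequality gives the pointwise bound
`|f x| ≥ |f x₀| - (a + b (‖x₀‖ + Δ/√2)) Δ/√2`. Integrating this constant over the square,
of area `Δ²`, yields the claim.
-/

open MeasureTheory Metric

section ClosedCube

variable {ι : Type*}

def closedCube (x₀ : EuclideanSpace ℝ ι) (r : ℝ) : Set (EuclideanSpace ℝ ι) :=
  {x | ∀ i, |x i - x₀ i| ≤ r}

variable {x₀ : EuclideanSpace ℝ ι} {r : ℝ}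

theorem self_mem_closedCube (hr : 0 ≤ r) : x₀ ∈ closedCube x₀ r := fun i => by
  simpa using hr

variable [Fintype ι]

theorem closedCube_eq_preimage_closedBall (hr : 0 ≤ r) :
    closedCube x₀ r = WithLp.ofLp ⁻¹' closedBall (WithLp.ofLp x₀) r := by
  ext x
  simp [closedCube, dist_pi_le_iff hr, Real.dist_eq]

theorem convex_closedCube (hr : 0 ≤ r) : Convex ℝ (closedCube x₀ r) := by
  rw [closedCube_eq_preimage_closedBall hr]
  exact (convex_closedBall _ _).linear_preimage (WithLp.linearEquiv 2 ℝ (ι → ℝ)).toLinearMap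

theorem isCompact_closedCube (hr : 0 ≤ r) : IsCompact (closedCube x₀ r) := by
  rw [closedCube_eq_preimage_closedBall hr]
  exact (PiLp.homeomorph 2 _).isCompact_preimage.2 (isCompact_closedBall _ _)

theorem volume_real_closedCube (hr : 0 ≤ r) :
    volume.real (closedCube x₀ r) = (2 * r) ^ Fintype.card ι := by
  rw [Measure.real, closedCube_eq_preimage_closedBall hr,
    (PiLp.volume_preserving_ofLp ι).measure_preimage measurableSet_closedBall.nullMeasurableSet,
    Real.volume_pi_closedBall _ hr, ENNReal.toReal_ofReal (by positivity)]

theorem closedCube_subset_closedBall (hr : 0 ≤ r) :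
    closedCube x₀ r ⊆ closedBall x₀ (√(Fintype.card ι) * r) := fun x hx => by
  rw [mem_closedBall_iff_norm, EuclideanSpace.norm_eq, ← Real.sqrt_sq hr,
    ← Real.sqrt_mul (Nat.cast_nonneg _)]
  gcongr
  calc ∑ i, ‖(x - x₀) i‖ ^ 2 ≤ ∑ _i : ι, r ^ 2 := by
        gcongr with i
        exact hx i
    _ = _ := by simp

end ClosedCube

theorem norm_gradient {F : Type*} [NormedAddCommGroup F] [InnerProductSpace ℝ F]
    [CompleteSpace F] (f : F → ℝ) (x : F) : ‖gradient f x‖ = ‖fderiv ℝ f x‖ :=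
  (InnerProductSpace.toDual ℝ F).symm.norm_map _

theorem Convex.norm_image_sub_le_of_norm_fderiv_le_add_mul_norm {E F : Type*}
    [NormedAddCommGroup E] [NormedSpace ℝ E] [NormedAddCommGroup F] [NormedSpace ℝ F]
    {f : E → F} {s : Set E} {a b r : ℝ} {x₀ x : E} (hs : Convex ℝ s)
    (hf : ∀ y ∈ s, DifferentiableAt ℝ f y) (hgrowth : ∀ y ∈ s, ‖fderiv ℝ f y‖ ≤ a + b * ‖y‖)
    (hb : 0 ≤ b) (hsr : s ⊆ closedBall x₀ r) (hx₀ : x₀ ∈ s) (hx : x ∈ s) :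
    ‖f x - f x₀‖ ≤ (a + b * (‖x₀‖ + r)) * r := by
  have hbound : ∀ y ∈ s, ‖fderiv ℝ f y‖ ≤ a + b * (‖x₀‖ + r) := fun y hy => by
    have : ‖y‖ ≤ ‖x₀‖ + r := norm_le_norm_add_const_of_dist_le (hsr hy)
    exact (hgrowth y hy).trans (by gcongr)
  have hC : 0 ≤ a + b * (‖x₀‖ + r) := (norm_nonneg _).trans (hbound x₀ hx₀)
  calc ‖f x - f x₀‖ ≤ (a + b * (‖x₀‖ + r)) * ‖x - x₀‖ :=
        hs.norm_image_sub_le_of_norm_fderiv_le hf hbound hx₀ hx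
    _ ≤ (a + b * (‖x₀‖ + r)) * r := by
        gcongr
        exact mem_closedBall_iff_norm.1 (hsr hx)

theorem stmt13_general (a b : ℝ) (hb : 0 ≤ b)
    (f : EuclideanSpace ℝ (Fin 2) → ℝ) (hf : Differentiable ℝ f)
    (hgrad : ∀ x, ‖gradient f x‖ ≤ a + b * ‖x‖)
    (x₀ : EuclideanSpace ℝ (Fin 2)) (Δ : ℝ) (hΔ : 0 < Δ) :
    ∫ x in {x : EuclideanSpace ℝ (Fin 2) | ∀ i, |x i - x₀ i| ≤ Δ / 2}, |f x| ≥
      Δ ^ 2 * |f x₀| - (Δ ^ 3 / Real.sqrt 2) * (a + b * ‖x₀‖) - (b / 2) * Δ ^ 4 := by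
  change _ ≤ ∫ x in closedCube x₀ (Δ / 2), |f x|
  have hr : 0 ≤ Δ / 2 := by positivity
  have hball : closedCube x₀ (Δ / 2) ⊆ closedBall x₀ (√2 * (Δ / 2)) := by
    simpa using closedCube_subset_closedBall (x₀ := x₀) hr
  have hlower : ∀ x ∈ closedCube x₀ (Δ / 2),
      |f x₀| - (a + b * (‖x₀‖ + √2 * (Δ / 2))) * (√2 * (Δ / 2)) ≤ |f x| := fun x hx => by
    have hmvt := (convex_closedCube hr).norm_image_sub_le_of_norm_fderiv_le_add_mul_norm
      (fun y _ => hf y) (fun y _ => norm_gradient f y ▸ hgrad y) hb hball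
      (self_mem_closedCube hr) hx
    rw [Real.norm_eq_abs] at hmvt
    linarith [abs_sub_abs_le_abs_sub (f x₀) (f x), abs_sub_comm (f x₀) (f x)]
  have hQ : IsCompact (closedCube x₀ (Δ / 2)) := isCompact_closedCube hr
  have hint := setIntegral_ge_of_const_le_real hQ.measurableSet
    (hQ.measure_lt_top (μ := volume)).ne hlower (hf.continuous.abs.continuousOn.integrableOn_compact hQ)
  rw [volume_real_closedCube hr, Fintype.card_fin] at hint
  convert hint using 1
  have h2 : √2 ^ 2 = 2 := Real.sq_sqrt zero_le_two
  field_simp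
  linear_combination (2 * Δ * (a + b * ‖x₀‖) + b * Δ ^ 2 * √2) * h2

/-- **Per-cell discretization bound (paper's Proposition 6, single grid cell).**
If `f : ℝ² → ℝ` is differentiable with `‖∇f(x)‖ ≤ a + b‖x‖` everywhere, then the
integral of `|f|` over the closed axis-aligned square of side `Δ` centred at `x₀`
is at least `Δ²|f(x₀)| − (Δ³/√2)(a + b‖x₀‖) − (b/2)Δ⁴`. -/
theorem stmt13 (a b : ℝ) (ha : 0 ≤ a) (hb : 0 ≤ b)
    (f : EuclideanSpace ℝ (Fin 2) → ℝ) (hf : Differentiable ℝ f)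
    (hgrad : ∀ x, ‖gradient f x‖ ≤ a + b * ‖x‖)
    (x₀ : EuclideanSpace ℝ (Fin 2)) (Δ : ℝ) (hΔ : 0 < Δ) :
    ∫ x in {x : EuclideanSpace ℝ (Fin 2) | ∀ i, |x i - x₀ i| ≤ Δ / 2}, |f x| ≥
      Δ ^ 2 * |f x₀| - (Δ ^ 3 / Real.sqrt 2) * (a + b * ‖x₀‖) - (b / 2) * Δ ^ 4 :=
  stmt13_general a b hb f hf hgrad x₀ Δ hΔ
end
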